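/- Let A be a noetherian commutative ring that is 𝔞-adically complete, P = F_dec(Z, A) the module of 𝔞-adically decaying functions on a set Z, and N a finitely generated A-module. Then the canonical homomorphism P ⊗_A N → lim_k (P_k ⊗_{A_k} N_k) is bijective, where A_k = A/𝔞^{k+1}, P_k = A_k ⊗_A P, N_k = A_k ⊗_A N. -/

import Mathlib

open scoped TensorProduct

/-- The module `P = F_dec(Z, A)` of `𝔞`-adically decaying functions `Z → A`:
functions `f` such that `{z | f z ∉ 𝔞^{k+1}}` is finite for every `k`. -/
def decayingFnsSelf {A : Type*} [CommRing A] (a : Ideal A) (Z : Type*) :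
    Submodule A (Z → A) where
  carrier := { f | ∀ k : ℕ, { z | f z ∉ a ^ (k + 1) }.Finite }
  add_mem' := fun {f g} hf hg k => by
    refine ((hf k).union (hg k)).subset fun z hz => ?_
    by_contra h
    simp only [Set.mem_union, Set.mem_setOf_eq, not_or, not_not] at h
    exact hz (Ideal.add_mem _ h.1 h.2)
  zero_mem' := fun k =>
    Set.finite_empty.subset fun z hz => (hz (Ideal.zero_mem _)).elim
  smul_mem' := fun r f hf k => by
    refine (hf k).subset fun z hz => ?_
    intro h
    exact hz (Ideal.mul_mem_left _ r h)

/-!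
Choose a presentation `A^m → A^n → N → 0`. By right exactness of `P ⊗ -`, `P ⊗ N` is the quotient
of `P^n` by the image of `P ⊗ A^m`, and a quotient of a complete module by an `𝔞`-adically closed
submodule is complete. `P` itself is complete because the decay condition survives pointwise
limits. The image is closed because it can be tested pointwise: a family `F ∈ P^n` lies in it as
soon as every value `F z` lies in the image `K` of `A^m` in `A^n` (closed by Krull's intersection
theorem), since by Artin–Rees the values can be lifted to `A^m` losing only a fixed number `c` of
powers of `𝔞`, so the lifted family is again decaying.
-/

open Submodule

section AdicTopology

variable {A : Type*} [CommRing A] (a : Ideal A) {M N : Type*} [AddCommGroup M] [Module A M]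
  [AddCommGroup N] [Module A N]

def IsAdicClosed (K : Submodule A M) : Prop :=
  ∀ x, (∀ n : ℕ, x ∈ K ⊔ a ^ n • (⊤ : Submodule A M)) → x ∈ K

theorem IsPrecomplete.of_surjective [IsPrecomplete a M] {f : M →ₗ[A] N}
    (hf : Function.Surjective f) : IsPrecomplete a N := by
  rw [← AdicCompletion.of_surjective_iff]
  refine Function.Surjective.of_comp (g := f) ?_
  have hcomm : AdicCompletion.of a N ∘ f = AdicCompletion.map a f ∘ AdicCompletion.of a M :=
    funext fun x => (AdicCompletion.map_of a f x).symm
  rw [hcomm]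
  exact (AdicCompletion.map_surjective a hf).comp (AdicCompletion.of_surjective a M)

theorem IsHausdorff.of_surjective_of_isAdicClosed {f : M →ₗ[A] N}
    (hf : Function.Surjective f) (hker : IsAdicClosed a (LinearMap.ker f)) :
    IsHausdorff a N := by
  refine ⟨fun y hy => ?_⟩
  obtain ⟨x, rfl⟩ := hf y
  refine hker x fun n => ?_
  have hfx : f x ∈ a ^ n • (⊤ : Submodule A N) := by simpa [SModEq.zero] using hy n
  rw [← LinearMap.range_eq_top.mpr hf, ← Submodule.map_top, ← Submodule.map_smul''] at hfx
  obtain ⟨w, hw, hwx⟩ := hfx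
  rw [← sub_add_cancel x w]
  exact add_mem_sup (by simp [hwx]) hw

theorem IsAdicComplete.of_surjective_of_isAdicClosed [IsAdicComplete a M] {f : M →ₗ[A] N}
    (hf : Function.Surjective f) (hker : IsAdicClosed a (LinearMap.ker f)) :
    IsAdicComplete a N where
  toIsHausdorff := .of_surjective_of_isAdicClosed a hf hker
  toIsPrecomplete := .of_surjective a hf

theorem isAdicClosed_of_le_jacobson [IsNoetherianRing A] [Module.Finite A M]
    (h : a ≤ (⊥ : Ideal A).jacobson) (K : Submodule A M) : IsAdicClosed a K := by
  intro x hx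
  rw [← Submodule.Quotient.mk_eq_zero]
  refine (IsHausdorff.of_le_jacobson a (M ⧸ K) h).haus _ fun n => ?_
  obtain ⟨y, hy, z, hz, rfl⟩ := mem_sup.mp (hx n)
  rw [SModEq.zero, Submodule.Quotient.mk_add, (Submodule.Quotient.mk_eq_zero K).mpr hy, zero_add]
  exact smul_top_le_comap_smul_top _ K.mkQ hz

instance IsAdicComplete.pi {ι : Type*} [Fintype ι] [DecidableEq ι] {M : ι → Type*}
    [∀ i, AddCommGroup (M i)] [∀ i, Module A (M i)] [∀ i, IsAdicComplete a (M i)] :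
    IsAdicComplete a (∀ i, M i) := by
  rw [← AdicCompletion.of_bijective_iff]
  have hcomm : AdicCompletion.piEquivOfFintype a M ∘ AdicCompletion.of a (∀ i, M i) =
      Pi.map fun i => AdicCompletion.of a (M i) := by
    ext x i
    simp
  rw [← (AdicCompletion.piEquivOfFintype a M).bijective.of_comp_iff', hcomm]
  exact Function.Bijective.piMap fun i => AdicCompletion.of_bijective_iff.mpr inferInstance

theorem pi_mem_smul_top {ι : Type*} [Fintype ι] [DecidableEq ι] (I : Ideal A) {x : ι → M}
    (hx : ∀ i, x i ∈ I • (⊤ : Submodule A M)) : x ∈ I • (⊤ : Submodule A (ι → M)) := by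
  rw [← Finset.univ_sum_single x]
  exact sum_mem fun i _ => smul_top_le_comap_smul_top I (LinearMap.single A (fun _ => M) i) (hx i)

end AdicTopology

section ArtinRees

variable {A : Type*} [CommRing A] (a : Ideal A) {M N : Type*} [AddCommGroup M] [Module A M]
  [AddCommGroup N] [Module A N] [IsNoetherianRing A] [Module.Finite A N]

theorem LinearMap.exists_pow_add_smul_top_inf_range_le_map (g : M →ₗ[A] N) :
    ∃ c, ∀ d, a ^ (d + c) • (⊤ : Submodule A N) ⊓ range g ≤ map g (a ^ d • ⊤) := by
  obtain ⟨c, hc⟩ := Ideal.exists_pow_inf_eq_pow_smul a (LinearMap.range g)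
  refine ⟨c, fun d => ?_⟩
  rw [hc (d + c) (by omega), Nat.add_sub_cancel, map_smul'', Submodule.map_top]
  exact smul_mono_right _ inf_le_right

theorem LinearMap.exists_lift_pow_smul_top [IsHausdorff a N] (g : M →ₗ[A] N) :
    ∃ c, ∀ v ∈ range g, ∃ u, g u = v ∧
      ∀ d, v ∈ a ^ (d + c) • (⊤ : Submodule A N) → u ∈ a ^ d • (⊤ : Submodule A M) := by
  classical
  obtain ⟨c, hc⟩ := g.exists_pow_add_smul_top_inf_range_le_map a
  refine ⟨c, fun v hv => ?_⟩
  by_cases hv0 : v = 0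
  · exact ⟨0, by simp [hv0], fun _ _ => zero_mem _⟩
  obtain ⟨t, ht⟩ : ∃ t, v ∉ a ^ t • (⊤ : Submodule A N) := by
    by_contra! H
    exact hv0 (IsHausdorff.haus' v fun n => by simpa [SModEq.zero] using H n)
  have hbound : ∀ d, v ∈ a ^ (d + c) • (⊤ : Submodule A N) → d ≤ t := fun d hd => by
    by_contra! h
    exact ht (Submodule.pow_smul_top_le a N (by omega) hd)
  -- lift `v` at the largest level `d` with `v ∈ 𝔞 ^ (d + c) N`
  by_cases hS : ∃ d, v ∈ a ^ (d + c) • (⊤ : Submodule A N)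
  · obtain ⟨d₀, hd₀⟩ := hS
    obtain ⟨u, hu, rfl⟩ := hc (Nat.findGreatest (fun d => v ∈ a ^ (d + c) • ⊤) t)
      ⟨Nat.findGreatest_spec (P := fun d => v ∈ a ^ (d + c) • (⊤ : Submodule A N))
        (hbound d₀ hd₀) hd₀, hv⟩
    exact ⟨u, rfl, fun d hd =>
      Submodule.pow_smul_top_le a M (Nat.le_findGreatest (hbound d hd) hd) hu⟩
  · obtain ⟨u, rfl⟩ := hv
    exact ⟨u, rfl, fun d hd => (hS ⟨d, hd⟩).elim⟩

end ArtinRees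

section Decaying

variable {A : Type*} [CommRing A] {a : Ideal A} {Z M N : Type*} [AddCommGroup M] [Module A M]
  [AddCommGroup N] [Module A N]

variable (a) in
/-- `f` tends to `0` in the `𝔞`-adic topology along the cofinite filter. -/
def IsDecaying (f : Z → M) : Prop :=
  ∀ k : ℕ, {z | f z ∉ a ^ k • (⊤ : Submodule A M)}.Finite

theorem IsDecaying.map {f : Z → M} (hf : IsDecaying a f) (g : M →ₗ[A] N) :
    IsDecaying a (g ∘ f) :=
  fun k => (hf k).subset fun _ hz hfz => hz (smul_top_le_comap_smul_top _ g hfz)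

theorem IsDecaying.of_apply {ι : Type*} [Fintype ι] [DecidableEq ι] {f : Z → ι → M}
    (hf : ∀ i, IsDecaying a fun z => f z i) : IsDecaying a f := by
  intro k
  refine (Set.finite_iUnion fun i => hf i k).subset fun z hz => ?_
  by_contra H
  simp only [Set.mem_iUnion, Set.mem_ofPred_eq, not_exists, not_not] at H
  exact hz (pi_mem_smul_top _ H)

theorem IsDecaying.exists_lift [IsNoetherianRing A] [Module.Finite A N] [IsHausdorff a N]
    {g : M →ₗ[A] N} {f : Z → N} (hf : IsDecaying a f) (hfg : ∀ z, f z ∈ LinearMap.range g) :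
    ∃ u : Z → M, IsDecaying a u ∧ g ∘ u = f := by
  obtain ⟨c, hc⟩ := g.exists_lift_pow_smul_top a
  choose u hgu hu using fun z => hc (f z) (hfg z)
  exact ⟨u, fun k => (hf (k + c)).subset fun z hz hfz => hz (hu z k hfz), funext hgu⟩

end Decaying

namespace decayingFnsSelf

variable {A : Type*} [CommRing A] {a : Ideal A} {Z : Type*}

theorem mem_iff_isDecaying {f : Z → A} : f ∈ decayingFnsSelf a Z ↔ IsDecaying a f := by
  simp only [IsDecaying, smul_eq_mul, Ideal.mul_top]
  refine ⟨fun hf k => ?_, fun hf k => hf (k + 1)⟩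
  cases k with
  | zero => simp
  | succ k => exact hf k

theorem isDecaying (f : decayingFnsSelf a Z) : IsDecaying a (f : Z → A) :=
  mem_iff_isDecaying.mp f.2

variable (a) in
def eval (z : Z) : decayingFnsSelf a Z →ₗ[A] A :=
  LinearMap.proj z ∘ₗ (decayingFnsSelf a Z).subtype

@[simp]
theorem eval_apply (z : Z) (f : decayingFnsSelf a Z) : eval a z f = (f : Z → A) z := rfl

theorem mem_pow_smul_top_iff [IsNoetherianRing A] [IsHausdorff a A] {f : decayingFnsSelf a Z}
    {k : ℕ} : f ∈ a ^ k • (⊤ : Submodule A (decayingFnsSelf a Z)) ↔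
      ∀ z, (f : Z → A) z ∈ a ^ k • (⊤ : Submodule A A) := by
  refine ⟨fun hf z => smul_top_le_comap_smul_top _ (eval a z) hf, fun hf => ?_⟩
  obtain ⟨n, s, hs⟩ :=
    Submodule.fg_iff_exists_fin_generating_family.mp (IsNoetherian.noetherian (a ^ k))
  -- expand every value of `f` in the generators `s` of `𝔞 ^ k`, with decaying coefficients
  obtain ⟨u, hu, hsu⟩ := (isDecaying f).exists_lift (g := Fintype.linearCombination A s)
    fun z => by simpa [hs] using hf z
  let coeff : Fin n → decayingFnsSelf a Z := fun i =>
    ⟨fun z => u z i, mem_iff_isDecaying.mpr (hu.map (LinearMap.proj i))⟩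
  have hf_eq : f = ∑ i, s i • coeff i := by
    ext z
    simp [coeff, ← congrFun hsu z, Fintype.linearCombination_apply, mul_comm]
  rw [hf_eq]
  exact sum_mem fun i _ => smul_mem_smul (hs ▸ subset_span ⟨i, rfl⟩) mem_top

theorem smodEq_pow_iff [IsNoetherianRing A] [IsHausdorff a A] {f g : decayingFnsSelf a Z}
    {k : ℕ} : f ≡ g [SMOD (a ^ k • ⊤ : Submodule A (decayingFnsSelf a Z))] ↔
      ∀ z, (f : Z → A) z ≡ (g : Z → A) z [SMOD (a ^ k • ⊤ : Submodule A A)] := by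
  simp only [SModEq.sub_mem, mem_pow_smul_top_iff, Submodule.coe_sub, Pi.sub_apply]

instance [IsNoetherianRing A] [IsAdicComplete a A] : IsAdicComplete a (decayingFnsSelf a Z) where
  haus' f hf := Subtype.ext <| funext fun z =>
    IsHausdorff.haus' (I := a) _ fun k => by simpa using smodEq_pow_iff.mp (hf k) z
  prec' f hf := by
    choose L hL using fun z => IsPrecomplete.prec' (I := a) (fun n => (f n : Z → A) z)
      fun hmn => smodEq_pow_iff.mp (hf hmn) z
    have hL_decay : IsDecaying a L := fun k => (isDecaying (f k) k).subset fun z hz hfz =>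
      hz (by simpa using sub_mem hfz (SModEq.sub_mem.mp (hL z k)))
    exact ⟨⟨L, mem_iff_isDecaying.mpr hL_decay⟩, fun n => smodEq_pow_iff.mpr fun z => hL z n⟩

section Families

variable {ι κ : Type*}

theorem ext_compLeft_eval {F G : ι → decayingFnsSelf a Z}
    (h : ∀ z, (eval a z).compLeft ι F = (eval a z).compLeft ι G) : F = G :=
  funext fun i => Subtype.ext <| funext fun z => congrFun (h z) i

theorem isDecaying_compLeft_eval [Fintype ι] [DecidableEq ι] (F : ι → decayingFnsSelf a Z) :
    IsDecaying a fun z => (eval a z).compLeft ι F :=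
  .of_apply fun i => isDecaying (F i)

theorem compLeft_eval_piScalarRight_lTensor [Fintype ι] [DecidableEq ι] [Fintype κ]
    [DecidableEq κ] (g : (ι → A) →ₗ[A] (κ → A)) (z : Z)
    (x : decayingFnsSelf a Z ⊗[A] (ι → A)) :
    (eval a z).compLeft κ (TensorProduct.piScalarRight A A _ κ (LinearMap.lTensor _ g x)) =
      g ((eval a z).compLeft ι (TensorProduct.piScalarRight A A _ ι x)) := by
  induction x using TensorProduct.induction_on with
  | zero => simp
  | tmul p v =>
    have hv : (eval a z).compLeft ι (fun i => v i • p) = (p : Z → A) z • v := by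
      ext i
      simp [mul_comm]
    ext j
    simp [TensorProduct.piScalarRightHom_tmul, hv, mul_comm]
  | add x y hx hy => simp only [map_add, hx, hy]

theorem isAdicClosed_range_piScalarRight_lTensor [IsNoetherianRing A] [IsAdicComplete a A]
    [Fintype ι] [DecidableEq ι] [Fintype κ] [DecidableEq κ] (g : (ι → A) →ₗ[A] (κ → A)) :
    IsAdicClosed a (LinearMap.range
      ((TensorProduct.piScalarRight A A (decayingFnsSelf a Z) κ).toLinearMap ∘ₗ
        LinearMap.lTensor _ g)) := by
  intro F hF
  have hF_range : ∀ z, (eval a z).compLeft κ F ∈ LinearMap.range g := fun z =>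
    isAdicClosed_of_le_jacobson a (IsAdicComplete.le_jacobson_bot a) _ _ fun k => by
      obtain ⟨_, ⟨x, rfl⟩, w, hw, rfl⟩ := mem_sup.mp (hF k)
      rw [map_add, LinearMap.comp_apply, LinearEquiv.coe_coe,
        compLeft_eval_piScalarRight_lTensor]
      exact add_mem_sup (LinearMap.mem_range_self g _) (smul_top_le_comap_smul_top _ _ hw)
  obtain ⟨u, hu, hgu⟩ := (isDecaying_compLeft_eval F).exists_lift hF_range
  let E : ι → decayingFnsSelf a Z := fun i =>
    ⟨fun z => u z i, mem_iff_isDecaying.mpr (hu.map (LinearMap.proj i))⟩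
  refine ⟨(TensorProduct.piScalarRight A A _ ι).symm E, ext_compLeft_eval fun z => ?_⟩
  rw [LinearMap.comp_apply, LinearEquiv.coe_coe, compLeft_eval_piScalarRight_lTensor,
    LinearEquiv.apply_symm_apply]
  exact congrFun hgu z

end Families

end decayingFnsSelf

/-- Let `A` be a noetherian ring, `𝔞`-adically complete, `P = F_dec(Z, A)` and `N` a
finitely generated `A`-module. Then the canonical homomorphism
`P ⊗_A N → lim_k (P_k ⊗_{A_k} N_k)` is bijective.  Since
`P_k ⊗_{A_k} N_k ≅ (P ⊗_A N)/𝔞^{k+1}(P ⊗_A N)` canonically, this says exactly that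
`P ⊗_A N` is `𝔞`-adically complete. -/
theorem decaying_tensor_fg_isAdicComplete {A : Type*} [CommRing A] [IsNoetherianRing A]
    (a : Ideal A) [IsAdicComplete a A] (Z : Type*)
    (N : Type*) [AddCommGroup N] [Module A N] [Module.Finite A N] :
    IsAdicComplete a ((↥(decayingFnsSelf a Z)) ⊗[A] N) := by
  obtain ⟨n, h, hh⟩ := Module.Finite.exists_fin' A N
  obtain ⟨m, g, hg⟩ :=
    (Submodule.fg_iff_exists_fin_linearMap A _).mp (IsNoetherian.noetherian (LinearMap.ker h))
  let e := TensorProduct.piScalarRight A A (decayingFnsSelf a Z) (Fin n)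
  have hexact := lTensor_exact (decayingFnsSelf a Z) (LinearMap.exact_iff.mpr hg.symm) hh
  have hker : LinearMap.ker (LinearMap.lTensor _ h ∘ₗ e.symm.toLinearMap) =
      LinearMap.range (e.toLinearMap ∘ₗ LinearMap.lTensor _ g) := by
    rw [LinearMap.ker_comp, hexact.linearMap_ker_eq, ← map_equiv_eq_comap_symm,
      LinearMap.range_comp]
  exact .of_surjective_of_isAdicClosed a
    ((LinearMap.lTensor_surjective _ hh).comp e.symm.surjective)
    (hker ▸ decayingFnsSelf.isAdicClosed_range_piScalarRight_lTensor g)
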